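/- Let 𝕂 be ℝ or ℂ and let V be a finite-dimensional 𝕂-vector space. For a symmetric bilinear map S : V × V → 𝕂 define the 4-linear map γ(S) : V⁴ → 𝕂 by γ(S)(w,x,y,z) = (1/3)(S(w,z)·S(x,y) − S(w,y)·S(x,z)). Then the 𝕂-linear span of the set { γ(S) : S symmetric bilinear on V } equals the vector space of all algebraic curvature tensors on V; in particular every γ(S) is an algebraic curvature tensor and every algebraic curvature tensor is a finite 𝕂-linear combination of tensors γ(S). -/

import Mathlib

/-- An algebraic curvature tensor on a `𝕂`-vector space `V`: a 4-linear map `T : V⁴ → 𝕂`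
with `T(w,x,y,z) = -T(w,x,z,y) = T(y,z,w,x)` and the first Bianchi identity. -/
def IsACT {𝕂 : Type*} [RCLike 𝕂] {V : Type*} [AddCommGroup V] [Module 𝕂 V]
    (T : MultilinearMap 𝕂 (fun _ : Fin 4 => V) 𝕂) : Prop :=
  ∀ w x y z : V,
    T ![w, x, y, z] = - T ![w, x, z, y] ∧
    T ![w, x, y, z] = T ![y, z, w, x] ∧
    T ![w, x, y, z] + T ![w, y, z, x] + T ![w, z, x, y] = 0

/-!
Each `γ(S)` satisfies the curvature identities, and these cut out a submodule. Conversely, for a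
curvature tensor `T` the tensor `Q(w,x,y,z) = T(w,y,z,x) + T(w,z,y,x)` is symmetric in `(w,x)`, in
`(y,z)` and under exchange of the two pairs, and the Bianchi identity gives
`3 T(w,x,y,z) = Q(w,z,x,y) - Q(w,y,x,z)`. The linear map `Q ↦ Q(w,z,x,y) - Q(w,y,x,z)`, precomposed
with the symmetrisation over that group of order 8, sends a product `f₀ f₁ f₂ f₃` of linear forms to
the polarisation of the quadratic map `S ↦ 3 γ(S)` at the symmetric forms `f₀ f₁ + f₁ f₀` and
`f₂ f₃ + f₃ f₂`. Since these products span all 4-linear forms, `24 T` lies in the span of the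
`γ(S)`.
-/

open Equiv

namespace Quadrilinear

variable {R : Type*} [CommRing R] {V : Type*} [AddCommGroup V] [Module R V]

local notation "Form₂" => MultilinearMap R (fun _ : Fin 2 => V) R
local notation "Form₄" => MultilinearMap R (fun _ : Fin 4 => V) R

theorem ext_fin_four {M : Type*} [AddCommMonoid M] [Module R M]
    {f g : MultilinearMap R (fun _ : Fin 4 => V) M}
    (h : ∀ w x y z, f ![w, x, y, z] = g ![w, x, y, z]) : f = g := by
  ext v
  have hv : v = ![v 0, v 1, v 2, v 3] := List.ofFn_inj.mp rfl
  rw [hv]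
  exact h _ _ _ _

noncomputable def outerProd (A B : Form₂) : Form₄ :=
  (LinearMap.mul' R R).compMultilinearMap ((A.domCoprod B).domDomCongr finSumFinEquiv)

@[simp]
theorem outerProd_apply (A B : Form₂) (w x y z : V) :
    outerProd A B ![w, x, y, z] = A ![w, x] * B ![y, z] := by
  simp only [outerProd, LinearMap.compMultilinearMap_apply, MultilinearMap.domDomCongr_apply,
    MultilinearMap.domCoprod_apply, LinearMap.mul'_apply]
  congr 2 <;> exact List.ofFn_inj.mp rfl

noncomputable def symmProd (f g : V →ₗ[R] R) : Form₂ :=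
  (MultilinearMap.mkPiAlgebra R (Fin 2) R).compLinearMap ![f, g] +
    (MultilinearMap.mkPiAlgebra R (Fin 2) R).compLinearMap ![g, f]

@[simp]
theorem symmProd_apply (f g : V →ₗ[R] R) (x y : V) :
    symmProd f g ![x, y] = f x * g y + g x * f y := by
  simp [symmProd]

theorem symmProd_symm (f g : V →ₗ[R] R) (x y : V) :
    symmProd f g ![x, y] = symmProd f g ![y, x] := by
  simp only [symmProd_apply]; ring

noncomputable def reindex (σ : Perm (Fin 4)) : Form₄ →ₗ[R] Form₄ :=
  (MultilinearMap.domDomCongrLinearEquiv R R V R σ).toLinearMap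

@[simp]
theorem reindex_apply (σ : Perm (Fin 4)) (Q : Form₄) (w x y z : V) :
    reindex σ Q ![w, x, y, z] =
      Q ![![w, x, y, z] (σ 0), ![w, x, y, z] (σ 1), ![w, x, y, z] (σ 2), ![w, x, y, z] (σ 3)] := by
  simp only [reindex, LinearEquiv.coe_coe, MultilinearMap.domDomCongrLinearEquiv_apply]
  exact congrArg Q (List.ofFn_inj.mp rfl)

noncomputable def toCurvature : Form₄ →ₗ[R] Form₄ :=
  reindex (swap 1 3 * swap 2 3) - reindex (swap 1 2)

@[simp]
theorem toCurvature_apply (Q : Form₄) (w x y z : V) :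
    toCurvature Q ![w, x, y, z] = Q ![w, z, x, y] - Q ![w, y, x, z] := by
  simp [toCurvature, swap_apply_of_ne_of_ne]

noncomputable def symmetrize : Form₄ →ₗ[R] Form₄ :=
  (1 + reindex (swap 0 2 * swap 1 3)) ∘ₗ (1 + reindex (swap 0 1)) ∘ₗ (1 + reindex (swap 2 3))

theorem symmetrize_eq_of_invariant {Q : Form₄} (hpair : reindex (swap 0 2 * swap 1 3) Q = Q)
    (hleft : reindex (swap 0 1) Q = Q) (hright : reindex (swap 2 3) Q = Q) :
    symmetrize Q = (8 : R) • Q := by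
  simp only [symmetrize, LinearMap.comp_apply, LinearMap.add_apply, Module.End.one_apply,
    map_add, hpair, hleft, hright]
  module

theorem toCurvature_symmetrize_mkPiAlgebra (f : Fin 4 → V →ₗ[R] R) :
    toCurvature (symmetrize ((MultilinearMap.mkPiAlgebra R (Fin 4) R).compLinearMap f)) =
      toCurvature (outerProd (symmProd (f 0) (f 1) + symmProd (f 2) (f 3))
        (symmProd (f 0) (f 1) + symmProd (f 2) (f 3))) -
      toCurvature (outerProd (symmProd (f 0) (f 1)) (symmProd (f 0) (f 1))) -
      toCurvature (outerProd (symmProd (f 2) (f 3)) (symmProd (f 2) (f 3))) := by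
  refine ext_fin_four fun w x y z => ?_
  simp only [symmetrize, LinearMap.comp_apply, LinearMap.add_apply, Module.End.one_apply, map_add,
    add_apply, sub_apply, toCurvature_apply, reindex_apply, Perm.coe_mul, Function.comp_apply,
    swap_apply_left, swap_apply_right, swap_apply_of_ne_of_ne, ne_eq, Fin.reduceEq,
    not_false_eq_true, Matrix.cons_val, MultilinearMap.compLinearMap_apply,
    MultilinearMap.mkPiAlgebra_apply, Fin.prod_univ_four, outerProd_apply, symmProd_apply]
  ring

theorem toCurvature_symmetrize_mem [Module.Free R V] [Module.Finite R V] {N : Submodule R Form₄}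
    (hN : ∀ S : Form₂, (∀ x y, S ![x, y] = S ![y, x]) → toCurvature (outerProd S S) ∈ N)
    (Q : Form₄) : toCurvature (symmetrize Q) ∈ N := by
  let b := Module.Free.chooseBasis R V
  let basis₄ := Basis.multilinearMap (fun _ : Fin 4 => b) (Module.Basis.singleton Unit R)
  suffices ⊤ ≤ N.comap (toCurvature ∘ₗ symmetrize) from this Submodule.mem_top
  rw [← basis₄.span_eq, Submodule.span_le]
  rintro _ ⟨⟨r, u⟩, rfl⟩
  have hprod : basis₄ (r, u) =
      (MultilinearMap.mkPiAlgebra R (Fin 4) R).compLinearMap fun i => b.coord (r i) := by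
    ext v
    simp [basis₄, Basis.multilinearMap_apply_apply]
  simp only [SetLike.mem_coe, Submodule.mem_comap, LinearMap.comp_apply, hprod,
    toCurvature_symmetrize_mkPiAlgebra]
  refine N.sub_mem (N.sub_mem (hN _ fun x y => ?_) (hN _ (symmProd_symm _ _)))
    (hN _ (symmProd_symm _ _))
  simp only [add_apply, symmProd_symm _ _ x y]

noncomputable def symmetricLift : Form₄ →ₗ[R] Form₄ :=
  reindex (swap 1 2 * swap 2 3) + reindex (swap 1 3)

@[simp]
theorem symmetricLift_apply (T : Form₄) (w x y z : V) :
    symmetricLift T ![w, x, y, z] = T ![w, y, z, x] + T ![w, z, y, x] := by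
  simp [symmetricLift, swap_apply_of_ne_of_ne]

end Quadrilinear

open Quadrilinear

section Curvature

variable {𝕂 : Type*} [RCLike 𝕂] {V : Type*} [AddCommGroup V] [Module 𝕂 V]

local notation "Form₄" => MultilinearMap 𝕂 (fun _ : Fin 4 => V) 𝕂

variable (𝕂 V) in
def curvatureTensors : Submodule 𝕂 Form₄ where
  carrier := {T | IsACT T}
  zero_mem' _ _ _ _ := by simp
  add_mem' {T T'} hT hT' w x y z := by
    obtain ⟨h₁, h₂, h₃⟩ := hT w x y z
    obtain ⟨h₁', h₂', h₃'⟩ := hT' w x y z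
    simp only [add_apply]
    exact ⟨by rw [h₁, h₁']; ring, by rw [h₂, h₂'], by linear_combination h₃ + h₃'⟩
  smul_mem' c T hT w x y z := by
    obtain ⟨h₁, h₂, h₃⟩ := hT w x y z
    simp only [smul_apply, smul_eq_mul]
    exact ⟨by rw [h₁]; ring, by rw [h₂], by linear_combination c * h₃⟩

theorem isACT_of_apply_eq {T : Form₄} (S : MultilinearMap 𝕂 (fun _ : Fin 2 => V) 𝕂)
    (hS : ∀ x y, S ![x, y] = S ![y, x]) (c : 𝕂)
    (hT : ∀ w x y z, T ![w, x, y, z] = c * (S ![w, z] * S ![x, y] - S ![w, y] * S ![x, z])) :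
    IsACT T := by
  intro w x y z
  refine ⟨?_, ?_, ?_⟩
  · rw [hT w x y z, hT w x z y]; ring
  · rw [hT w x y z, hT y z w x, hS y x, hS z w, hS y w, hS z x]; ring
  · rw [hT w x y z, hT w y z x, hT w z x y, hS y x, hS z x, hS z y]; ring

theorem IsACT.apply_swap_swap {T : Form₄} (hT : IsACT T) (w x y z : V) :
    T ![w, x, y, z] = T ![x, w, z, y] := by
  have h₁ := fun a b c d => (hT a b c d).1
  have h₂ := fun a b c d => (hT a b c d).2.1
  linear_combination h₂ w x y z + h₁ y z w x + h₂ x w y z - h₁ x w y z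

theorem IsACT.toCurvature_symmetricLift {T : Form₄} (hT : IsACT T) :
    toCurvature (symmetricLift T) = (3 : 𝕂) • T := by
  refine ext_fin_four fun w x y z => ?_
  have h₁ := fun a b c d => (hT a b c d).1
  simp only [toCurvature_apply, symmetricLift_apply, smul_apply, smul_eq_mul]
  linear_combination -h₁ w x y z + h₁ w y x z - (hT w x y z).2.2

theorem IsACT.symmetrize_symmetricLift {T : Form₄} (hT : IsACT T) :
    symmetrize (symmetricLift T) = (8 : 𝕂) • symmetricLift T := by
  have h₂ := fun a b c d => (hT a b c d).2.1
  have hf := hT.apply_swap_swap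
  refine symmetrize_eq_of_invariant ?_ ?_ ?_ <;> refine ext_fin_four fun w x y z => ?_ <;>
    simp only [symmetricLift_apply, reindex_apply, Perm.coe_mul, Function.comp_apply,
      swap_apply_left, swap_apply_right, swap_apply_of_ne_of_ne, ne_eq, Fin.reduceEq,
      not_false_eq_true, Matrix.cons_val]
  · linear_combination hf y w x z + h₂ y x w z
  · linear_combination hf x y z w + h₂ y x w z + hf x z y w + h₂ z x w y
  · ring

end Curvature

theorem stmt0 {𝕂 : Type*} [RCLike 𝕂] (V : Type*) [AddCommGroup V] [Module 𝕂 V]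
    [FiniteDimensional 𝕂 V] :
    (Submodule.span 𝕂
        {T : MultilinearMap 𝕂 (fun _ : Fin 4 => V) 𝕂 |
          ∃ S : MultilinearMap 𝕂 (fun _ : Fin 2 => V) 𝕂,
            (∀ x y : V, S ![x, y] = S ![y, x]) ∧
            ∀ w x y z : V,
              T ![w, x, y, z] =
                (3 : 𝕂)⁻¹ * (S ![w, z] * S ![x, y] - S ![w, y] * S ![x, z])} :
      Set (MultilinearMap 𝕂 (fun _ : Fin 4 => V) 𝕂)) =
      {T | IsACT T} := by
  refine subset_antisymm (Submodule.span_le (p := curvatureTensors 𝕂 V) |>.mpr ?_) ?_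
  · rintro T ⟨S, hS, hT⟩
    exact isACT_of_apply_eq S hS _ hT
  · intro T hT
    refine (Submodule.smul_mem_iff _ (by norm_num : (24 : 𝕂) ≠ 0)).mp ?_
    have h24 : (24 : 𝕂) • T = toCurvature (symmetrize (symmetricLift T)) := by
      rw [hT.symmetrize_symmetricLift, map_smul, hT.toCurvature_symmetricLift, smul_smul]
      norm_num
    rw [h24]
    refine toCurvature_symmetrize_mem (fun S hS => ?_) _
    refine (Submodule.smul_mem_iff _ (inv_ne_zero (three_ne_zero (α := 𝕂)))).mp
      (Submodule.subset_span ?_)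
    exact ⟨S, hS, fun w x y z => by simp⟩
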